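/- arXiv:1501.02424 — 2 statements merged into one kernel-verified Lean document; each statement's English description precedes it below -/
import Mathlib

section
/- Let w be any function in the shape space P(K) = P₂(K) + span{x₁³, x₂³} of the two-dimensional rectangular Morley element on the square K. Then the deviation of the tangential derivative from its edge mean is also the same function on opposite edges: for all x₂ ∈ [x₂c−h, x₂c+h], (R⁰_{e₂}(∂w/∂x₂))(x₂) = (R⁰_{e₄}(∂w/∂x₂))(x₂), and for all x₁ ∈ [x₁c−h, x₁c+h], (R⁰_{e₁}(∂w/∂x₁))(x₁) = (R⁰_{e₃}(∂w/∂x₁))(x₁). -/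
/-!
On a Morley shape function the only term coupling `x₁` and `x₂` is `x₁ x₂`, so the tangential
derivative along a vertical line `x₁ = const` is a fixed function of `x₂` plus a constant
depending on the line; subtracting the edge mean removes that constant. The horizontal edges
follow by exchanging the variables, which preserves the shape space.
-/

open MeasureTheory

/-- Partial derivative in the first variable of a curried function on `ℝ²`. -/
noncomputable def pdx (f : ℝ → ℝ → ℝ) : ℝ → ℝ → ℝ := fun x y => deriv (fun t => f t y) x

/-- Partial derivative in the second variable of a curried function on `ℝ²`. -/
noncomputable def pdy (f : ℝ → ℝ → ℝ) : ℝ → ℝ → ℝ := fun x y => deriv (fun t => f x t) y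

/-- Membership in the shape space `P(K) = P₂(K) + span{x₁³, x₂³}` of the two-dimensional
rectangular Morley element. -/
def MorleyShape2 (w : ℝ → ℝ → ℝ) : Prop :=
  ∃ c0 c1 c2 c3 c4 c5 c6 c7 : ℝ, ∀ x y : ℝ,
    w x y = c0 + c1 * x + c2 * y + c3 * x ^ 2 + c4 * (x * y) + c5 * y ^ 2
      + c6 * x ^ 3 + c7 * y ^ 3

theorem hasDerivAt_cubic (a b c d t : ℝ) :
    HasDerivAt (fun s ↦ a + b * s + c * s ^ 2 + d * s ^ 3) (b + 2 * c * t + 3 * d * t ^ 2) t := by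
  have := ((((hasDerivAt_const t a).add ((hasDerivAt_id t).const_mul b)).add
    ((hasDerivAt_pow 2 t).const_mul c)).add ((hasDerivAt_pow 3 t).const_mul d))
  exact this.congr_deriv (by ring)

theorem sub_mean_eq_of_eq_add_const {f g : ℝ → ℝ} {a b k : ℝ}
    (hf : IntervalIntegrable f volume a b) (hab : a ≠ b) (hg : ∀ t, g t = f t + k) (y : ℝ) :
    g y - (b - a)⁻¹ * ∫ t in a..b, g t = f y - (b - a)⁻¹ * ∫ t in a..b, f t := by
  have hba : b - a ≠ 0 := sub_ne_zero.mpr hab.symm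
  simp only [hg, intervalIntegral.integral_add hf intervalIntegrable_const,
    intervalIntegral.integral_const, smul_eq_mul]
  field_simp
  ring

namespace MorleyShape2

theorem swap {w : ℝ → ℝ → ℝ} (hw : MorleyShape2 w) : MorleyShape2 (fun x y ↦ w y x) := by
  obtain ⟨c0, c1, c2, c3, c4, c5, c6, c7, hwc⟩ := hw
  exact ⟨c0, c2, c1, c5, c4, c3, c7, c6, fun x y ↦ (hwc y x).trans (by ring)⟩

theorem exists_pdy_eq_add {w : ℝ → ℝ → ℝ} (hw : MorleyShape2 w) :
    ∃ (p : ℝ → ℝ) (c : ℝ), Continuous p ∧ ∀ x y, pdy w x y = p y + c * x := by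
  obtain ⟨c0, c1, c2, c3, c4, c5, c6, c7, hwc⟩ := hw
  refine ⟨fun y ↦ c2 + 2 * c5 * y + 3 * c7 * y ^ 2, c4, by fun_prop, fun x y ↦ ?_⟩
  have hline : (fun t ↦ w x t) = fun t ↦
      (c0 + c1 * x + c3 * x ^ 2 + c6 * x ^ 3) + (c2 + c4 * x) * t + c5 * t ^ 2 + c7 * t ^ 3 := by
    funext t
    rw [hwc]
    ring
  rw [pdy, hline, (hasDerivAt_cubic _ _ _ _ y).deriv]
  ring

theorem pdy_sub_mean_eq {w : ℝ → ℝ → ℝ} (hw : MorleyShape2 w) {a b : ℝ} (hab : a ≠ b)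
    (x x' y : ℝ) :
    pdy w x y - (b - a)⁻¹ * (∫ t in a..b, pdy w x t)
      = pdy w x' y - (b - a)⁻¹ * (∫ t in a..b, pdy w x' t) := by
  obtain ⟨p, c, hp, hpdy⟩ := hw.exists_pdy_eq_add
  have hint : IntervalIntegrable p volume a b := hp.intervalIntegrable a b
  rw [sub_mean_eq_of_eq_add_const hint hab (hpdy x),
    sub_mean_eq_of_eq_add_const hint hab (hpdy x')]

theorem pdx_sub_mean_eq {w : ℝ → ℝ → ℝ} (hw : MorleyShape2 w) {a b : ℝ} (hab : a ≠ b)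
    (y y' x : ℝ) :
    pdx w x y - (b - a)⁻¹ * (∫ t in a..b, pdx w t y)
      = pdx w x y' - (b - a)⁻¹ * (∫ t in a..b, pdx w t y') :=
  hw.swap.pdy_sub_mean_eq hab y y' x

end MorleyShape2

/-- For `w` in the 2D rectangular Morley shape space, the deviation of the tangential
derivative from its edge mean coincides on the two opposite edges of `K`. -/
theorem stmt_1 (x1c x2c h : ℝ) (hh : 0 < h) (w : ℝ → ℝ → ℝ) (hw : MorleyShape2 w) :
    (∀ y ∈ Set.Icc (x2c - h) (x2c + h),
        pdy w (x1c + h) y - (1 / (2 * h)) * (∫ t in (x2c - h)..(x2c + h), pdy w (x1c + h) t)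
          = pdy w (x1c - h) y - (1 / (2 * h)) * (∫ t in (x2c - h)..(x2c + h), pdy w (x1c - h) t)) ∧
    (∀ x ∈ Set.Icc (x1c - h) (x1c + h),
        pdx w x (x2c - h) - (1 / (2 * h)) * (∫ t in (x1c - h)..(x1c + h), pdx w t (x2c - h))
          = pdx w x (x2c + h) - (1 / (2 * h)) * (∫ t in (x1c - h)..(x1c + h), pdx w t (x2c + h))) := by
  have hedge : ∀ c : ℝ, c - h ≠ c + h := fun c ↦ by linarith
  have hlen : ∀ c : ℝ, 1 / (2 * h) = ((c + h) - (c - h))⁻¹ := fun c ↦ by ring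
  constructor
  · intro y _
    rw [hlen x2c]
    exact hw.pdy_sub_mean_eq (hedge x2c) _ _ y
  · intro x _
    rw [hlen x1c]
    exact hw.pdx_sub_mean_eq (hedge x1c) _ _ x
end

section
/- There exists a constant C > 0, independent of h, the center of K, u and w, such that for every h > 0, every square K of half side h, every function u of class C⁴ on a neighborhood of K, and every w in the shape space P(K) = P₂(K) + span{x₁³, x₂³}, the contribution of the second normal derivatives on the pair of opposite vertical edges satisfies |∫_{x₂c−h}^{x₂c+h} [ (∂²u/∂x₁²)(x₁c+h, x₂) · (R⁰_{e₂}(∂w/∂x₁))(x₂) − (∂²u/∂x₁²)(x₁c−h, x₂) · (R⁰_{e₄}(∂w/∂x₁))(x₂) ] dx₂| ≤ C h² |u|_{H⁴(K)} |w|_{H²(K)}. -/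
open MeasureTheory

/-- The `H²` seminorm of `v` on the rectangle `[a,b] × [c,d]`, each ordering of mixed
partial derivatives counted. -/
noncomputable def semiH2R (v : ℝ → ℝ → ℝ) (a b c d : ℝ) : ℝ :=
  Real.sqrt (∫ x in a..b, ∫ y in c..d,
    (pdx (pdx v) x y) ^ 2 + (pdx (pdy v) x y) ^ 2 + (pdy (pdx v) x y) ^ 2
      + (pdy (pdy v) x y) ^ 2)

/-- The `H⁴` seminorm of `u` on the rectangle `[a,b] × [c,d]`, each ordering of mixed
partial derivatives counted (hence the binomial coefficients). -/
noncomputable def semiH4R (u : ℝ → ℝ → ℝ) (a b c d : ℝ) : ℝ :=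
  Real.sqrt (∫ x in a..b, ∫ y in c..d,
    (pdx (pdx (pdx (pdx u))) x y) ^ 2 + 4 * (pdx (pdx (pdx (pdy u))) x y) ^ 2
      + 6 * (pdx (pdx (pdy (pdy u))) x y) ^ 2 + 4 * (pdx (pdy (pdy (pdy u))) x y) ^ 2
      + (pdy (pdy (pdy (pdy u))) x y) ^ 2)

/-- `u` is of class `C⁴` on a neighborhood of the rectangle `[a,b] × [c,d]`. -/
def C4Near (u : ℝ → ℝ → ℝ) (a b c d : ℝ) : Prop :=
  ∃ U : Set (ℝ × ℝ), IsOpen U ∧ Set.Icc a b ×ˢ Set.Icc c d ⊆ U ∧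
    ContDiffOn ℝ 4 (fun p : ℝ × ℝ => u p.1 p.2) U

/-!
On each vertical edge `∂w/∂x₁ = A(x₁) + c x₂` is affine in `x₂` with the same slope
`c = ∂²w/∂x₁∂x₂`, so both edge fluctuations `R⁰(∂w/∂x₁)` equal `c (x₂ - x₂c)`. This weight has
mean zero, so the difference of `∂²u/∂x₁²` across the two edges may be replaced by its deviation
from its value at `x₂ = x₂c`. That is a mixed second difference of `∂²u/∂x₁²`, i.e. a double
integral of `∂⁴u/∂x₁³∂x₂` over a subrectangle of `K`, which Cauchy–Schwarz bounds by
`h |u|_{H⁴(K)}`. The weight is at most `|c| h`, and `2h |c| ≤ |w|_{H²(K)}`; this gives `C = 1`.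
-/

open Set Function

section PartialDerivatives

variable {f g : ℝ → ℝ → ℝ} {U : Set (ℝ × ℝ)} {x y : ℝ}

theorem hasDerivAt_pdx (hf : DifferentiableAt ℝ (uncurry f) (x, y)) :
    HasDerivAt (fun t => f t y) (pdx f x y) x := by
  have hline : DifferentiableAt ℝ (fun t : ℝ => (t, y)) x := by fun_prop
  exact (hf.comp x hline).hasDerivAt

theorem hasDerivAt_pdy (hf : DifferentiableAt ℝ (uncurry f) (x, y)) :
    HasDerivAt (fun t => f x t) (pdy f x y) y := by
  have hline : DifferentiableAt ℝ (fun t : ℝ => (x, t)) y := by fun_prop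
  exact (hf.comp y hline).hasDerivAt

theorem pdx_eq_fderiv (hf : DifferentiableAt ℝ (uncurry f) (x, y)) :
    pdx f x y = fderiv ℝ (uncurry f) (x, y) (1, 0) := by
  have h := hf.hasFDerivAt.comp_hasDerivAt x ((hasDerivAt_id x).prodMk (hasDerivAt_const x y))
  exact (hasDerivAt_pdx hf).unique h

theorem pdy_eq_fderiv (hf : DifferentiableAt ℝ (uncurry f) (x, y)) :
    pdy f x y = fderiv ℝ (uncurry f) (x, y) (0, 1) := by
  have h := hf.hasFDerivAt.comp_hasDerivAt y ((hasDerivAt_const y x).prodMk (hasDerivAt_id y))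
  exact (hasDerivAt_pdy hf).unique h

theorem eventuallyEq_uncurry_pdx (hU : IsOpen U) (hf : DifferentiableOn ℝ (uncurry f) U)
    {p : ℝ × ℝ} (hp : p ∈ U) :
    uncurry (pdx f) =ᶠ[nhds p] fun q => fderiv ℝ (uncurry f) q (1, 0) := by
  filter_upwards [hU.mem_nhds hp] with q hq
  exact pdx_eq_fderiv (hf.differentiableAt (hU.mem_nhds hq))

theorem eventuallyEq_uncurry_pdy (hU : IsOpen U) (hf : DifferentiableOn ℝ (uncurry f) U)
    {p : ℝ × ℝ} (hp : p ∈ U) :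
    uncurry (pdy f) =ᶠ[nhds p] fun q => fderiv ℝ (uncurry f) q (0, 1) := by
  filter_upwards [hU.mem_nhds hp] with q hq
  exact pdy_eq_fderiv (hf.differentiableAt (hU.mem_nhds hq))

theorem contDiffOn_uncurry_pdx {m n : WithTop ℕ∞} (hU : IsOpen U)
    (hf : ContDiffOn ℝ n (uncurry f) U) (hmn : m + 1 ≤ n) :
    ContDiffOn ℝ m (uncurry (pdx f)) U :=
  have hn : n ≠ 0 := by rintro rfl; simp at hmn
  ((hf.fderiv_of_isOpen hU hmn).clm_apply contDiffOn_const).congr fun _ hp =>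
    (eventuallyEq_uncurry_pdx hU (hf.differentiableOn hn) hp).eq_of_nhds

theorem contDiffOn_uncurry_pdy {m n : WithTop ℕ∞} (hU : IsOpen U)
    (hf : ContDiffOn ℝ n (uncurry f) U) (hmn : m + 1 ≤ n) :
    ContDiffOn ℝ m (uncurry (pdy f)) U :=
  have hn : n ≠ 0 := by rintro rfl; simp at hmn
  ((hf.fderiv_of_isOpen hU hmn).clm_apply contDiffOn_const).congr fun _ hp =>
    (eventuallyEq_uncurry_pdy hU (hf.differentiableOn hn) hp).eq_of_nhds

theorem Set.EqOn.uncurry_pdx (hU : IsOpen U) (hfg : EqOn (uncurry f) (uncurry g) U) :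
    EqOn (uncurry (pdx f)) (uncurry (pdx g)) U := by
  rintro ⟨x, y⟩ hp
  have hline : ∀ᶠ t in nhds x, (t, y) ∈ U :=
    (continuous_id.prodMk continuous_const).continuousAt.preimage_mem_nhds (hU.mem_nhds hp)
  exact Filter.EventuallyEq.deriv_eq (hline.mono fun t ht => hfg ht)

theorem pdy_pdx_eqOn_pdx_pdy (hU : IsOpen U) (hf : ContDiffOn ℝ 2 (uncurry f) U) :
    EqOn (uncurry (pdy (pdx f))) (uncurry (pdx (pdy f))) U := by
  rintro ⟨x, y⟩ hp
  have hf1 : DifferentiableOn ℝ (uncurry f) U := hf.differentiableOn (by simp)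
  have hd2 : DifferentiableAt ℝ (fderiv ℝ (uncurry f)) (x, y) :=
    ((hf.fderiv_of_isOpen hU (m := 1) (by norm_num)).differentiableOn (by simp)).differentiableAt
      (hU.mem_nhds hp)
  have hdir (v w : ℝ × ℝ) : fderiv ℝ (fun q => fderiv ℝ (uncurry f) q v) (x, y) w
      = fderiv ℝ (fderiv ℝ (uncurry f)) (x, y) w v := by
    rw [fderiv_clm_apply hd2 (differentiableAt_const v)]; simp
  have hdx : DifferentiableOn ℝ (uncurry (pdx f)) U :=
    (contDiffOn_uncurry_pdx hU hf (m := 1) (by norm_num)).differentiableOn (by simp)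
  have hdy : DifferentiableOn ℝ (uncurry (pdy f)) U :=
    (contDiffOn_uncurry_pdy hU hf (m := 1) (by norm_num)).differentiableOn (by simp)
  show pdy (pdx f) x y = pdx (pdy f) x y
  rw [pdy_eq_fderiv (hdx.differentiableAt (hU.mem_nhds hp)),
    pdx_eq_fderiv (hdy.differentiableAt (hU.mem_nhds hp)),
    (eventuallyEq_uncurry_pdx hU hf1 hp).fderiv_eq, (eventuallyEq_uncurry_pdy hU hf1 hp).fderiv_eq,
    hdir, hdir]
  exact ((hf.contDiffAt (hU.mem_nhds hp)).isSymmSndFDerivAt (by simp)) _ _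

theorem pdy_pdx_pdx_pdx_eqOn (hU : IsOpen U) (hf : ContDiffOn ℝ 4 (uncurry f) U) :
    EqOn (uncurry (pdy (pdx (pdx (pdx f))))) (uncurry (pdx (pdx (pdx (pdy f))))) U := by
  have hx : ContDiffOn ℝ 3 (uncurry (pdx f)) U := contDiffOn_uncurry_pdx hU hf (by norm_num)
  have hxx : ContDiffOn ℝ 2 (uncurry (pdx (pdx f))) U :=
    contDiffOn_uncurry_pdx hU hx (by norm_num)
  have h₁ := pdy_pdx_eqOn_pdx_pdy hU hxx
  have h₂ := (pdy_pdx_eqOn_pdx_pdy hU (hx.of_le (by norm_num))).uncurry_pdx hU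
  have h₃ := ((pdy_pdx_eqOn_pdx_pdy hU (hf.of_le (by norm_num))).uncurry_pdx hU).uncurry_pdx hU
  exact h₁.trans (h₂.trans h₃)

theorem integral_pdx_eq_sub (hU : IsOpen U) (hf : ContDiffOn ℝ 1 (uncurry f) U) {a b : ℝ}
    (hseg : ∀ s ∈ uIcc a b, (s, y) ∈ U) : ∫ s in a..b, pdx f s y = f b y - f a y := by
  have hcont : ContinuousOn (fun s => pdx f s y) (uIcc a b) :=
    (contDiffOn_uncurry_pdx hU hf (m := 0) (by simp)).continuousOn.comp (by fun_prop) hseg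
  exact intervalIntegral.integral_eq_sub_of_hasDerivAt (fun s hs => hasDerivAt_pdx
    ((hf.differentiableOn one_ne_zero).differentiableAt (hU.mem_nhds (hseg s hs))))
    hcont.intervalIntegrable

theorem integral_pdy_eq_sub (hU : IsOpen U) (hf : ContDiffOn ℝ 1 (uncurry f) U) {a b : ℝ}
    (hseg : ∀ t ∈ uIcc a b, (x, t) ∈ U) : ∫ t in a..b, pdy f x t = f x b - f x a := by
  have hcont : ContinuousOn (fun t => pdy f x t) (uIcc a b) :=
    (contDiffOn_uncurry_pdy hU hf (m := 0) (by simp)).continuousOn.comp (by fun_prop) hseg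
  exact intervalIntegral.integral_eq_sub_of_hasDerivAt (fun t ht => hasDerivAt_pdy
    ((hf.differentiableOn one_ne_zero).differentiableAt (hU.mem_nhds (hseg t ht))))
    hcont.intervalIntegrable

theorem sub_sub_sub_eq_integral_integral_pdy_pdx (hU : IsOpen U)
    (hf : ContDiffOn ℝ 2 (uncurry f) U) {l r a b y₀ : ℝ} (hK : uIcc l r ×ˢ uIcc a b ⊆ U)
    (hy₀ : y₀ ∈ uIcc a b) (hy : y ∈ uIcc a b) :
    f r y - f l y - (f r y₀ - f l y₀) = ∫ s in l..r, ∫ t in y₀..y, pdy (pdx f) s t := by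
  have hf1 : ContDiffOn ℝ 1 (uncurry f) U := hf.of_le (by norm_num)
  have hx : ContDiffOn ℝ 1 (uncurry (pdx f)) U := contDiffOn_uncurry_pdx hU hf (by norm_num)
  have hcont (t : ℝ) (ht : t ∈ uIcc a b) : ContinuousOn (fun s => pdx f s t) (uIcc l r) :=
    hx.continuousOn.comp (continuous_id.prodMk continuous_const).continuousOn
      fun s hs => hK ⟨hs, ht⟩
  rw [← integral_pdx_eq_sub hU hf1 fun s hs => hK ⟨hs, hy⟩,
    ← integral_pdx_eq_sub hU hf1 fun s hs => hK ⟨hs, hy₀⟩,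
    ← intervalIntegral.integral_sub (hcont y hy).intervalIntegrable
      (hcont y₀ hy₀).intervalIntegrable]
  refine intervalIntegral.integral_congr fun s hs => ?_
  exact (integral_pdy_eq_sub hU hx fun t ht => hK ⟨hs, uIcc_subset_uIcc hy₀ hy ht⟩).symm

end PartialDerivatives

section RectangleIntegrals

open intervalIntegral

variable {F G : ℝ → ℝ → ℝ} {l r a b : ℝ}

theorem continuousOn_integral_of_continuousOn_uncurry (hlr : l ≤ r) (hab : a ≤ b)
    (hF : ContinuousOn (uncurry F) (Icc l r ×ˢ Icc a b)) :
    ContinuousOn (fun x => ∫ y in a..b, F x y) (Icc l r) := by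
  -- clamping both variables into the rectangle changes nothing on it and makes `F` continuous
  set Fclamp : ℝ → ℝ → ℝ := fun x y => F (projIcc l r hlr x) (projIcc a b hab y)
  have hproj : Continuous fun p : ℝ × ℝ =>
      ((projIcc l r hlr p.1 : ℝ), (projIcc a b hab p.2 : ℝ)) := by
    fun_prop
  have hclamp : Continuous (uncurry Fclamp) :=
    hF.comp_continuous hproj fun p => ⟨(projIcc l r hlr p.1).2, (projIcc a b hab p.2).2⟩
  refine (continuous_parametric_intervalIntegral_of_continuous' hclamp a b).continuousOn.congr
    fun x hx => integral_congr fun y hy => ?_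
  rw [uIcc_of_le hab] at hy
  simp [Fclamp, projIcc_of_mem hlr hx, projIcc_of_mem hab hy]

theorem integral_integral_mono_on (hlr : l ≤ r) (hab : a ≤ b)
    (hF : ContinuousOn (uncurry F) (Icc l r ×ˢ Icc a b))
    (hG : ContinuousOn (uncurry G) (Icc l r ×ˢ Icc a b))
    (hFG : ∀ x ∈ Icc l r, ∀ y ∈ Icc a b, F x y ≤ G x y) :
    ∫ x in l..r, ∫ y in a..b, F x y ≤ ∫ x in l..r, ∫ y in a..b, G x y :=
  integral_mono_on hlr
    ((continuousOn_integral_of_continuousOn_uncurry hlr hab hF).intervalIntegrable_of_Icc hlr)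
    ((continuousOn_integral_of_continuousOn_uncurry hlr hab hG).intervalIntegrable_of_Icc hlr)
    fun x hx => integral_mono_on hab ((hF.uncurry_left x hx).intervalIntegrable_of_Icc hab)
      ((hG.uncurry_left x hx).intervalIntegrable_of_Icc hab) (hFG x hx)

theorem sq_integral_le_mul_integral_sq {f : ℝ → ℝ} (hab : a ≤ b)
    (hf : IntervalIntegrable f volume a b)
    (hf2 : IntervalIntegrable (fun x => f x ^ 2) volume a b) :
    (∫ x in a..b, f x) ^ 2 ≤ (b - a) * ∫ x in a..b, f x ^ 2 := by
  set I := ∫ x in a..b, f x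
  have hexpand : ∫ x in a..b, ((b - a) * f x - I) ^ 2
      = (b - a) * ((b - a) * (∫ x in a..b, f x ^ 2) - I ^ 2) := by
    have hpoint : (fun x => ((b - a) * f x - I) ^ 2)
        = fun x => (b - a) ^ 2 * f x ^ 2 - 2 * (b - a) * I * f x + I ^ 2 := by
      ext x; ring
    rw [hpoint, integral_add ((hf2.const_mul _).sub (hf.const_mul _)) intervalIntegrable_const,
      integral_sub (hf2.const_mul _) (hf.const_mul _), intervalIntegral.integral_const_mul,
      intervalIntegral.integral_const_mul, intervalIntegral.integral_const, smul_eq_mul]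
    ring
  have hnonneg : 0 ≤ ∫ x in a..b, ((b - a) * f x - I) ^ 2 :=
    integral_nonneg hab fun _ _ => sq_nonneg _
  rcases hab.eq_or_lt with rfl | hlt
  · simp [I]
  · rw [hexpand, mul_nonneg_iff_of_pos_left (sub_pos.mpr hlt)] at hnonneg
    exact sub_nonneg.mp hnonneg

theorem sq_integral_integral_abs_le (hlr : l ≤ r) (hab : a ≤ b)
    (hF : ContinuousOn (uncurry F) (Icc l r ×ˢ Icc a b)) :
    (∫ x in l..r, ∫ y in a..b, |F x y|) ^ 2
      ≤ (r - l) * (b - a) * ∫ x in l..r, ∫ y in a..b, F x y ^ 2 := by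
  have hη :=
    continuousOn_integral_of_continuousOn_uncurry (F := fun x y => |F x y|) hlr hab hF.abs
  have hρ := continuousOn_integral_of_continuousOn_uncurry (F := fun x y => F x y ^ 2) hlr hab
    ((continuous_pow 2).comp_continuousOn hF)
  calc (∫ x in l..r, ∫ y in a..b, |F x y|) ^ 2
      ≤ (r - l) * ∫ x in l..r, (∫ y in a..b, |F x y|) ^ 2 :=
        sq_integral_le_mul_integral_sq hlr (hη.intervalIntegrable_of_Icc hlr)
          ((hη.pow 2).intervalIntegrable_of_Icc hlr)
    _ ≤ (r - l) * ∫ x in l..r, (b - a) * ∫ y in a..b, F x y ^ 2 := by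
        refine mul_le_mul_of_nonneg_left (integral_mono_on hlr
          ((hη.pow 2).intervalIntegrable_of_Icc hlr)
          ((hρ.const_smul (b - a)).intervalIntegrable_of_Icc hlr) fun x hx => ?_)
          (sub_nonneg.mpr hlr)
        have hFx := hF.uncurry_left x hx
        simpa only [sq_abs] using sq_integral_le_mul_integral_sq hab
          (hFx.abs.intervalIntegrable_of_Icc hab) ((hFx.abs.pow 2).intervalIntegrable_of_Icc hab)
    _ = (r - l) * (b - a) * ∫ x in l..r, ∫ y in a..b, F x y ^ 2 := by
        rw [intervalIntegral.integral_const_mul, mul_assoc]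

theorem abs_integral_integral_le_integral_integral_abs (hlr : l ≤ r) (hab : a ≤ b)
    (hF : ContinuousOn (uncurry F) (Icc l r ×ˢ Icc a b)) {c d : ℝ} (hc : c ∈ Icc a b)
    (hd : d ∈ Icc a b) :
    |∫ x in l..r, ∫ y in c..d, F x y| ≤ ∫ x in l..r, ∫ y in a..b, |F x y| := by
  have hη :=
    continuousOn_integral_of_continuousOn_uncurry (F := fun x y => |F x y|) hlr hab hF.abs
  have hinner (x : ℝ) (hx : x ∈ Icc l r) :
      |∫ y in c..d, F x y| ≤ ∫ y in a..b, |F x y| := by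
    have hcd : uIoc c d ⊆ uIoc a b := uIoc_subset_uIoc_of_uIcc_subset_uIcc
      (uIcc_subset_uIcc (by rwa [uIcc_of_le hab]) (by rwa [uIcc_of_le hab]))
    calc |∫ y in c..d, F x y| ≤ |(∫ y in c..d, |F x y|)| := by
          simpa only [Real.norm_eq_abs] using
            (norm_integral_le_abs_integral_norm : ‖∫ y in c..d, F x y‖ ≤ _)
      _ ≤ |(∫ y in a..b, |F x y|)| := abs_integral_mono_interval hcd
          (Filter.Eventually.of_forall fun _ => abs_nonneg _)
          ((hF.uncurry_left x hx).abs.intervalIntegrable_of_Icc hab)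
      _ = ∫ y in a..b, |F x y| := abs_of_nonneg (integral_nonneg hab fun _ _ => abs_nonneg _)
  rw [← Real.norm_eq_abs]
  refine (norm_integral_le_abs_of_norm_le ((ae_restrict_iff' measurableSet_uIoc).mpr
    (Filter.Eventually.of_forall fun x hx => ?_)) (hη.intervalIntegrable_of_Icc hlr)).trans_eq
    (abs_of_nonneg (integral_nonneg hlr fun x _ => integral_nonneg hab fun _ _ => abs_nonneg _))
  rw [uIoc_of_le hlr] at hx
  exact hinner x (Ioc_subset_Icc_self hx)

end RectangleIntegrals

section CenteredIntegrals

variable {m h c : ℝ}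

theorem sub_average_eq_of_affine {g : ℝ → ℝ} {A : ℝ} (hh : h ≠ 0)
    (hg : ∀ t, g t = A + c * t) (y : ℝ) :
    g y - 1 / (2 * h) * (∫ t in (m - h)..(m + h), g t) = c * (y - m) := by
  simp only [hg]
  rw [intervalIntegral.integral_add intervalIntegrable_const
      ((continuous_const_mul c).intervalIntegrable _ _),
    intervalIntegral.integral_const, intervalIntegral.integral_const_mul, integral_id, smul_eq_mul]
  field_simp
  ring

theorem abs_integral_mul_sub_center_le {φ : ℝ → ℝ} {k J : ℝ} (hh : 0 ≤ h)
    (hφ : IntervalIntegrable φ volume (m - h) (m + h))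
    (hbound : ∀ y ∈ Icc (m - h) (m + h), |φ y - k| ≤ J) :
    |∫ y in (m - h)..(m + h), φ y * (c * (y - m))| ≤ J * (|c| * h) * (2 * h) := by
  have hmh : m - h ≤ m + h := by linarith
  have hJ : 0 ≤ J := (abs_nonneg _).trans (hbound m ⟨by linarith, by linarith⟩)
  have hodd : ∫ y in (m - h)..(m + h), k * (c * (y - m)) = 0 := by
    simp [intervalIntegral.integral_comp_sub_right (fun y => y)]
  have hshift : ∫ y in (m - h)..(m + h), φ y * (c * (y - m))
      = ∫ y in (m - h)..(m + h), (φ y - k) * (c * (y - m)) := by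
    rw [← sub_zero (∫ y in (m - h)..(m + h), φ y * (c * (y - m))), ← hodd,
      ← intervalIntegral.integral_sub (hφ.mul_continuousOn (by fun_prop))
        ((by fun_prop : Continuous fun y => k * (c * (y - m))).intervalIntegrable _ _)]
    congr 1; ext y; ring
  rw [hshift, ← Real.norm_eq_abs]
  refine (intervalIntegral.norm_integral_le_of_norm_le_const (C := J * (|c| * h))
    fun y hy => ?_).trans_eq ?_
  · rw [uIoc_of_le hmh] at hy
    rw [Real.norm_eq_abs, abs_mul, abs_mul]
    refine mul_le_mul (hbound y (Ioc_subset_Icc_self hy))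
      (mul_le_mul_of_nonneg_left (abs_le.mpr ⟨by linarith [hy.1], by linarith [hy.2]⟩)
        (abs_nonneg c)) (by positivity) hJ
  · rw [abs_of_nonneg (by linarith : (0 : ℝ) ≤ m + h - (m - h))]
    ring

end CenteredIntegrals

section Seminorms

variable {U : Set (ℝ × ℝ)} {a b c d : ℝ}

theorem abs_mul_sqrt_le_semiH2R {v : ℝ → ℝ → ℝ} {k : ℝ} (hU : IsOpen U)
    (hv : ContDiffOn ℝ 2 (uncurry v) U) (hK : Icc a b ×ˢ Icc c d ⊆ U) (hab : a ≤ b)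
    (hcd : c ≤ d) (hk : ∀ x ∈ Icc a b, ∀ y ∈ Icc c d, pdy (pdx v) x y = k) :
    |k| * Real.sqrt ((b - a) * (d - c)) ≤ semiH2R v a b c d := by
  have hvx : ContDiffOn ℝ 1 (uncurry (pdx v)) U := contDiffOn_uncurry_pdx hU hv (by norm_num)
  have hvy : ContDiffOn ℝ 1 (uncurry (pdy v)) U := contDiffOn_uncurry_pdy hU hv (by norm_num)
  have hcont {g : ℝ → ℝ → ℝ} (hg : ContDiffOn ℝ 0 (uncurry g) U) :
      ContinuousOn (uncurry g) (Icc a b ×ˢ Icc c d) :=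
    hg.continuousOn.mono hK
  have hxx := hcont (contDiffOn_uncurry_pdx hU hvx le_rfl)
  have hxy := hcont (contDiffOn_uncurry_pdx hU hvy le_rfl)
  have hyx := hcont (contDiffOn_uncurry_pdy hU hvx le_rfl)
  have hyy := hcont (contDiffOn_uncurry_pdy hU hvy le_rfl)
  have hmono := integral_integral_mono_on (F := fun _ _ => k ^ 2)
    (G := fun x y => pdx (pdx v) x y ^ 2 + pdx (pdy v) x y ^ 2 + pdy (pdx v) x y ^ 2
      + pdy (pdy v) x y ^ 2) hab hcd continuousOn_const (by fun_prop) fun x hx y hy => by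
    rw [← hk x hx y hy]
    nlinarith [sq_nonneg (pdx (pdx v) x y), sq_nonneg (pdx (pdy v) x y),
      sq_nonneg (pdy (pdy v) x y)]
  simp only [intervalIntegral.integral_const, smul_eq_mul] at hmono
  rw [semiH2R, ← Real.sqrt_sq_eq_abs, ← Real.sqrt_mul (sq_nonneg k)]
  exact Real.sqrt_le_sqrt (by linarith)

theorem four_mul_integral_integral_sq_le_semiH4R_sq {u : ℝ → ℝ → ℝ} (hU : IsOpen U)
    (hu : ContDiffOn ℝ 4 (uncurry u) U) (hK : Icc a b ×ˢ Icc c d ⊆ U) (hab : a ≤ b)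
    (hcd : c ≤ d) :
    4 * ∫ x in a..b, ∫ y in c..d, pdx (pdx (pdx (pdy u))) x y ^ 2
      ≤ semiH4R u a b c d ^ 2 := by
  have hcont {g : ℝ → ℝ → ℝ} (hg : ContDiffOn ℝ 0 (uncurry g) U) :
      ContinuousOn (uncurry g) (Icc a b ×ˢ Icc c d) :=
    hg.continuousOn.mono hK
  have hx : ContDiffOn ℝ 3 (uncurry (pdx u)) U := contDiffOn_uncurry_pdx hU hu (by norm_num)
  have hy : ContDiffOn ℝ 3 (uncurry (pdy u)) U := contDiffOn_uncurry_pdy hU hu (by norm_num)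
  have hxx : ContDiffOn ℝ 2 (uncurry (pdx (pdx u))) U :=
    contDiffOn_uncurry_pdx hU hx (by norm_num)
  have hxy : ContDiffOn ℝ 2 (uncurry (pdx (pdy u))) U :=
    contDiffOn_uncurry_pdx hU hy (by norm_num)
  have hyy : ContDiffOn ℝ 2 (uncurry (pdy (pdy u))) U :=
    contDiffOn_uncurry_pdy hU hy (by norm_num)
  have hxxx : ContDiffOn ℝ 1 (uncurry (pdx (pdx (pdx u)))) U :=
    contDiffOn_uncurry_pdx hU hxx (by norm_num)
  have hxxy : ContDiffOn ℝ 1 (uncurry (pdx (pdx (pdy u)))) U :=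
    contDiffOn_uncurry_pdx hU hxy (by norm_num)
  have hxyy : ContDiffOn ℝ 1 (uncurry (pdx (pdy (pdy u)))) U :=
    contDiffOn_uncurry_pdx hU hyy (by norm_num)
  have hyyy : ContDiffOn ℝ 1 (uncurry (pdy (pdy (pdy u)))) U :=
    contDiffOn_uncurry_pdy hU hyy (by norm_num)
  have h₁ := hcont (contDiffOn_uncurry_pdx hU hxxx le_rfl)
  have h₂ := hcont (contDiffOn_uncurry_pdx hU hxxy le_rfl)
  have h₃ := hcont (contDiffOn_uncurry_pdx hU hxyy le_rfl)
  have h₄ := hcont (contDiffOn_uncurry_pdx hU hyyy le_rfl)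
  have h₅ := hcont (contDiffOn_uncurry_pdy hU hyyy le_rfl)
  have hmono := integral_integral_mono_on (F := fun x y => 4 * pdx (pdx (pdx (pdy u))) x y ^ 2)
    (G := fun x y => pdx (pdx (pdx (pdx u))) x y ^ 2 + 4 * pdx (pdx (pdx (pdy u))) x y ^ 2
      + 6 * pdx (pdx (pdy (pdy u))) x y ^ 2 + 4 * pdx (pdy (pdy (pdy u))) x y ^ 2
      + pdy (pdy (pdy (pdy u))) x y ^ 2) hab hcd (by fun_prop) (by fun_prop) fun x _ y _ => by
    nlinarith [sq_nonneg (pdx (pdx (pdx (pdx u))) x y), sq_nonneg (pdx (pdx (pdy (pdy u))) x y),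
      sq_nonneg (pdx (pdy (pdy (pdy u))) x y), sq_nonneg (pdy (pdy (pdy (pdy u))) x y)]
  simp only [intervalIntegral.integral_const_mul] at hmono
  have hnonneg : 0 ≤ 4 * ∫ x in a..b, ∫ y in c..d, pdx (pdx (pdx (pdy u))) x y ^ 2 :=
    mul_nonneg zero_le_four (intervalIntegral.integral_nonneg hab fun _ _ =>
      intervalIntegral.integral_nonneg hcd fun _ _ => sq_nonneg _)
  rw [semiH4R, Real.sq_sqrt (hnonneg.trans hmono)]
  exact hmono

end Seminorms

theorem MorleyShape2.contDiff {w : ℝ → ℝ → ℝ} (hw : MorleyShape2 w) {n : WithTop ℕ∞} :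
    ContDiff ℝ n (uncurry w) := by
  obtain ⟨c0, c1, c2, c3, c4, c5, c6, c7, hw⟩ := hw
  have hpoly : uncurry w = fun p : ℝ × ℝ => c0 + c1 * p.1 + c2 * p.2 + c3 * p.1 ^ 2
      + c4 * (p.1 * p.2) + c5 * p.2 ^ 2 + c6 * p.1 ^ 3 + c7 * p.2 ^ 3 :=
    funext fun p => hw p.1 p.2
  rw [hpoly]
  fun_prop

theorem MorleyShape2.exists_pdx_eq {w : ℝ → ℝ → ℝ} (hw : MorleyShape2 w) :
    ∃ (A : ℝ → ℝ) (c : ℝ), ∀ x y, pdx w x y = A x + c * y := by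
  obtain ⟨c0, c1, c2, c3, c4, c5, c6, c7, hw⟩ := hw
  refine ⟨fun x => c1 + 2 * c3 * x + 3 * c6 * x ^ 2, c4, fun x y => ?_⟩
  simp only [pdx, hw]
  simp (disch := fun_prop) only [deriv_fun_add, deriv_const', deriv_const_mul_id', deriv_fun_mul,
    deriv_fun_pow, deriv_id'', zero_add, zero_mul, mul_zero, add_zero, Nat.cast_ofNat,
    Nat.add_one_sub_one, pow_one, mul_one, one_mul]
  ring

theorem abs_pdx_pdx_mixed_difference_le {u : ℝ → ℝ → ℝ} {U : Set (ℝ × ℝ)}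
    (hU : IsOpen U) (hu : ContDiffOn ℝ 4 (uncurry u) U) {l r a b y₀ y : ℝ}
    (hK : Icc l r ×ˢ Icc a b ⊆ U) (hlr : l ≤ r) (hab : a ≤ b) (hy₀ : y₀ ∈ Icc a b) (hy : y ∈ Icc a b) :
    |pdx (pdx u) r y - pdx (pdx u) l y - (pdx (pdx u) r y₀ - pdx (pdx u) l y₀)|
      ≤ Real.sqrt ((r - l) * (b - a)) / 2 * semiH4R u l r a b := by
  have hx : ContDiffOn ℝ 3 (uncurry (pdx u)) U := contDiffOn_uncurry_pdx hU hu (by norm_num)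
  have hxx : ContDiffOn ℝ 2 (uncurry (pdx (pdx u))) U :=
    contDiffOn_uncurry_pdx hU hx (by norm_num)
  have hV : ContinuousOn (uncurry (pdx (pdx (pdx (pdy u))))) (Icc l r ×ˢ Icc a b) :=
    (contDiffOn_uncurry_pdx hU (contDiffOn_uncurry_pdx hU (contDiffOn_uncurry_pdx hU
      (contDiffOn_uncurry_pdy hU hu (m := 3) (by norm_num)) (m := 2) (by norm_num))
      (m := 1) (by norm_num)) (m := 0) (by norm_num)).continuousOn.mono hK
  have hK' : uIcc l r ×ˢ uIcc a b ⊆ U := by rwa [uIcc_of_le hlr, uIcc_of_le hab]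
  have hsub : uIcc y₀ y ⊆ Icc a b := by
    rw [← uIcc_of_le hab]
    exact uIcc_subset_uIcc (by rwa [uIcc_of_le hab]) (by rwa [uIcc_of_le hab])
  have hswap : ∫ s in l..r, ∫ t in y₀..y, pdy (pdx (pdx (pdx u))) s t
      = ∫ s in l..r, ∫ t in y₀..y, pdx (pdx (pdx (pdy u))) s t :=
    intervalIntegral.integral_congr fun s hs => intervalIntegral.integral_congr fun t ht =>
      pdy_pdx_pdx_pdx_eqOn hU hu
        (show (s, t) ∈ U from hK ⟨by rwa [uIcc_of_le hlr] at hs, hsub ht⟩)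
  rw [sub_sub_sub_eq_integral_integral_pdy_pdx hU hxx hK' (by rwa [uIcc_of_le hab])
    (by rwa [uIcc_of_le hab]), hswap]
  refine (abs_integral_integral_le_integral_integral_abs hlr hab hV hy₀ hy).trans ?_
  have hJ0 : 0 ≤ ∫ x in l..r, ∫ y in a..b, |pdx (pdx (pdx (pdy u))) x y| :=
    intervalIntegral.integral_nonneg hlr fun _ _ =>
      intervalIntegral.integral_nonneg hab fun _ _ => abs_nonneg _
  have hA : 0 ≤ (r - l) * (b - a) := mul_nonneg (sub_nonneg.mpr hlr) (sub_nonneg.mpr hab)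
  have hCS := sq_integral_integral_abs_le hlr hab hV
  have hH4 := four_mul_integral_integral_sq_le_semiH4R_sq hU hu hK hlr hab
  have hS : 0 ≤ semiH4R u l r a b := Real.sqrt_nonneg _
  refine (pow_le_pow_iff_left₀ hJ0 (by positivity) two_ne_zero).mp ?_
  rw [mul_pow, div_pow, Real.sq_sqrt hA]
  nlinarith [mul_le_mul_of_nonneg_left hH4 hA]

theorem abs_integral_pdx_pdx_edges_mul_le {u : ℝ → ℝ → ℝ} {U : Set (ℝ × ℝ)}
    (hU : IsOpen U) (hu : ContDiffOn ℝ 4 (uncurry u) U) {l r m h c : ℝ}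
    (hK : Icc l r ×ˢ Icc (m - h) (m + h) ⊆ U) (hlr : l ≤ r) (hh : 0 ≤ h) :
    |∫ y in (m - h)..(m + h), (pdx (pdx u) r y - pdx (pdx u) l y) * (c * (y - m))|
      ≤ Real.sqrt ((r - l) * (m + h - (m - h))) / 2 * semiH4R u l r (m - h) (m + h)
        * (|c| * h) * (2 * h) := by
  have hmh : m - h ≤ m + h := by linarith
  have hxx : ContinuousOn (uncurry (pdx (pdx u))) (Icc l r ×ˢ Icc (m - h) (m + h)) :=
    (contDiffOn_uncurry_pdx hU (contDiffOn_uncurry_pdx hU hu (m := 3) (by norm_num))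
      (m := 0) (by norm_num)).continuousOn.mono hK
  have hedges : IntervalIntegrable (fun y => pdx (pdx u) r y - pdx (pdx u) l y)
      volume (m - h) (m + h) :=
    ((hxx.uncurry_left _ (right_mem_Icc.mpr hlr)).sub
      (hxx.uncurry_left _ (left_mem_Icc.mpr hlr))).intervalIntegrable_of_Icc hmh
  exact abs_integral_mul_sub_center_le hh hedges fun y hy =>
    abs_pdx_pdx_mixed_difference_le (y₀ := m) hU hu hK hlr hmh ⟨by linarith, by linarith⟩ hy

/-- Superconvergence of the normal-normal boundary term on a pair of opposite vertical
edges of one element. -/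
theorem stmt_6 :
    ∃ C > (0:ℝ), ∀ h : ℝ, 0 < h → ∀ x1c x2c : ℝ, ∀ u w : ℝ → ℝ → ℝ,
      C4Near u (x1c - h) (x1c + h) (x2c - h) (x2c + h) → MorleyShape2 w →
      |∫ y in (x2c - h)..(x2c + h),
          pdx (pdx u) (x1c + h) y
              * (pdx w (x1c + h) y
                - (1 / (2 * h)) * (∫ t in (x2c - h)..(x2c + h), pdx w (x1c + h) t))
            - pdx (pdx u) (x1c - h) y
              * (pdx w (x1c - h) y
                - (1 / (2 * h)) * (∫ t in (x2c - h)..(x2c + h), pdx w (x1c - h) t))|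
        ≤ C * h ^ 2 * semiH4R u (x1c - h) (x1c + h) (x2c - h) (x2c + h) * semiH2R w (x1c - h) (x1c + h) (x2c - h) (x2c + h) := by
  refine ⟨1, one_pos, fun h hh x1c x2c u w ⟨U, hU, hKU, hu⟩ hw => ?_⟩
  obtain ⟨A, c, hA⟩ := hw.exists_pdx_eq
  have hside : Real.sqrt ((x1c + h - (x1c - h)) * (x2c + h - (x2c - h))) = 2 * h := by
    rw [show (x1c + h - (x1c - h)) * (x2c + h - (x2c - h)) = (2 * h) * (2 * h) by ring]
    exact Real.sqrt_mul_self (by positivity)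
  have hlr : x1c - h ≤ x1c + h := by linarith
  have hab : x2c - h ≤ x2c + h := by linarith
  have hH2 := abs_mul_sqrt_le_semiH2R (k := c) isOpen_univ hw.contDiff.contDiffOn
    (subset_univ _) hlr hab fun x _ y _ => by simp [pdy, hA]
  have hH4 := abs_integral_pdx_pdx_edges_mul_le (c := c) hU hu hKU hlr hh.le
  have hS4 : 0 ≤ semiH4R u (x1c - h) (x1c + h) (x2c - h) (x2c + h) := Real.sqrt_nonneg _
  rw [hside] at hH2 hH4
  simp only [sub_average_eq_of_affine hh.ne' (hA _), ← sub_mul]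
  calc _ ≤ 2 * h / 2 * semiH4R u (x1c - h) (x1c + h) (x2c - h) (x2c + h) * (|c| * h) * (2 * h) :=
        hH4
    _ = h ^ 2 * semiH4R u (x1c - h) (x1c + h) (x2c - h) (x2c + h) * (|c| * (2 * h)) := by ring
    _ ≤ _ := by rw [one_mul]; gcongr
end
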